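/- In ×_m P_n with n ≥ 5, the leverage centrality of every vertex v satisfies -1/(2m+1) ≤ l(v) ≤ 1/(8m-2); in particular, as m → ∞ the leverage centrality of every vertex tends to 0. -/

import Mathlib

open SimpleGraph Finset

/-- Degree of a vertex (classical decidability so arbitrary graphs work). -/
noncomputable def deg {V : Type*} [Fintype V] (G : SimpleGraph V) (v : V) : ℕ :=
  letI : DecidableRel G.Adj := Classical.decRel _
  G.degree v

/-- Neighbor finset of a vertex. -/
noncomputable def nbrs {V : Type*} [Fintype V] (G : SimpleGraph V) (v : V) : Finset V :=
  letI : DecidableRel G.Adj := Classical.decRel _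
  G.neighborFinset v

/-- Leverage centrality of a vertex. -/
noncomputable def lev {V : Type*} [Fintype V] (G : SimpleGraph V) (v : V) : ℚ :=
  (1 / (deg G v : ℚ)) *
    ∑ u ∈ nbrs G v, ((deg G v : ℚ) - (deg G u : ℚ)) / ((deg G v : ℚ) + (deg G u : ℚ))

/-- The lattice `×_m P_n`: Cartesian product of `m` paths on `n` vertices.
Vertices are `m`-tuples of coordinates in `Fin n`; two vertices are adjacent
iff they differ in exactly one coordinate, by exactly 1. -/
def lattice (m n : ℕ) : SimpleGraph (Fin m → Fin n) where
  Adj v w := ∃ i, ((v i : ℕ) + 1 = (w i : ℕ) ∨ (w i : ℕ) + 1 = (v i : ℕ)) ∧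
    ∀ j, j ≠ i → v j = w j
  symm := by
    constructor
    rintro v w ⟨i, h, hj⟩
    exact ⟨i, h.symm, fun j hne => (hj j hne).symm⟩
  loopless := by
    constructor
    rintro v ⟨i, h, -⟩
    omega

/-!
Let `D = deg v`. A neighbour of `v` along an axis where `v` sits at an end of the path has degree
`D + 1`, so it contributes `-1/(2D+1)` to `D * l(v)`. Along an axis where `v` sits inside the
path the two neighbours have degree `D` or `D - 1`, and for `n ≥ 4` at most one of them has degree
`D - 1`, so together they contribute between `0` and `1/(2D-1)`. Hence
`D * l(v) ≥ -m/(2D+1)` and `D * l(v) ≤ (D-m)/(2D-1) + (D-2m)/(2D+1)`, and `m ≤ D ≤ 2m` turns these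
into the two bounds, the upper one being attained at `D = 2m`. Both are `O(1/m)`.
-/

section Generic

variable {V : Type*} [Fintype V] {G : SimpleGraph V} {v u : V}

lemma mem_nbrs : u ∈ nbrs G v ↔ G.Adj v u := by
  classical exact mem_neighborFinset G v u

lemma deg_eq_card_nbrs : deg G v = #(nbrs G v) := rfl

end Generic

section Path

variable {n : ℕ} {a : Fin n}

lemma nbrs_pathGraph_of_pos_of_lt (h0 : 0 < (a : ℕ)) (h1 : (a : ℕ) + 1 < n) :
    nbrs (pathGraph n) a = {⟨a - 1, by omega⟩, ⟨a + 1, h1⟩} := by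
  ext x
  simp only [mem_nbrs, pathGraph_adj, mem_insert, mem_singleton, Fin.ext_iff]
  omega

lemma nbrs_pathGraph_of_eq_zero (h0 : (a : ℕ) = 0) (hn : 1 < n) :
    nbrs (pathGraph n) a = {⟨1, hn⟩} := by
  ext x
  simp only [mem_nbrs, pathGraph_adj, mem_singleton, Fin.ext_iff]
  omega

lemma nbrs_pathGraph_of_succ_eq (h0 : (a : ℕ) + 1 = n) (hn : 1 < n) :
    nbrs (pathGraph n) a = {⟨a - 1, by omega⟩} := by
  ext x
  simp only [mem_nbrs, pathGraph_adj, mem_singleton, Fin.ext_iff]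
  omega

lemma deg_pathGraph (hn : 2 ≤ n) (a : Fin n) :
    deg (pathGraph n) a = if 0 < (a : ℕ) ∧ (a : ℕ) + 1 < n then 2 else 1 := by
  rw [deg_eq_card_nbrs]
  split_ifs with h
  · rw [nbrs_pathGraph_of_pos_of_lt h.1 h.2, card_pair]
    simp only [ne_eq, Fin.ext_iff]
    omega
  · rcases Nat.eq_zero_or_pos (a : ℕ) with h0 | h0
    · rw [nbrs_pathGraph_of_eq_zero h0 hn, card_singleton]
    · rw [nbrs_pathGraph_of_succ_eq (by omega) hn, card_singleton]

end Path

/-- If a lattice vertex `v` of degree `D` has coordinate `a` on some axis, its neighbour with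
coordinate `x` there has degree `D - deg a + deg x`: this is the share of those neighbours in
`D * lev v`. -/
noncomputable def axisContribution (n : ℕ) (D : ℚ) (a : Fin n) : ℚ :=
  ∑ x ∈ nbrs (pathGraph n) a,
    ((deg (pathGraph n) a : ℚ) - deg (pathGraph n) x) /
      (2 * D - deg (pathGraph n) a + deg (pathGraph n) x)

section AxisContribution

variable {n : ℕ} {D : ℚ} {a : Fin n}

lemma axisContribution_of_end (hn : 3 ≤ n) (ha : (a : ℕ) = 0 ∨ (a : ℕ) + 1 = n) :
    axisContribution n D a = -(1 / (2 * D + 1)) := by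
  have deg_a : deg (pathGraph n) a = 1 := by
    rw [deg_pathGraph (by omega), if_neg (by omega)]
  rcases ha with h0 | h0
  · rw [axisContribution, nbrs_pathGraph_of_eq_zero h0 (by omega), sum_singleton, deg_a,
      deg_pathGraph (by omega), if_pos (by simp only; omega)]
    ring
  · rw [axisContribution, nbrs_pathGraph_of_succ_eq h0 (by omega), sum_singleton, deg_a,
      deg_pathGraph (by omega), if_pos (by simp only; omega)]
    ring

lemma axisContribution_of_interior (hn : 4 ≤ n) (hD : 1 ≤ D) (h0 : 0 < (a : ℕ))
    (h1 : (a : ℕ) + 1 < n) :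
    0 ≤ axisContribution n D a ∧ axisContribution n D a ≤ 1 / (2 * D - 1) := by
  have hpair : (⟨a - 1, by omega⟩ : Fin n) ≠ ⟨a + 1, h1⟩ := by
    simp only [ne_eq, Fin.mk.injEq]; omega
  rw [axisContribution, nbrs_pathGraph_of_pos_of_lt h0 h1, sum_pair hpair, deg_pathGraph (by omega),
    if_pos ⟨h0, h1⟩, deg_pathGraph (by omega), deg_pathGraph (by omega)]
  have hpos : (0 : ℚ) < 2 * D - 1 := by linarith
  -- both neighbours are ends only when `n = 3`
  split_ifs with hl hr hr <;> simp only at hl hr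
  · norm_num; linarith
  · norm_num [show 2 * D - 2 + 1 = 2 * D - 1 by ring, hpos.le]
  · norm_num [show 2 * D - 2 + 1 = 2 * D - 1 by ring, hpos.le]
  · omega

lemma neg_le_axisContribution (hn : 4 ≤ n) (hD : 1 ≤ D) (a : Fin n) :
    -(1 / (2 * D + 1)) ≤ axisContribution n D a := by
  by_cases ha : 0 < (a : ℕ) ∧ (a : ℕ) + 1 < n
  · refine le_trans ?_ (axisContribution_of_interior hn hD ha.1 ha.2).1
    rw [neg_nonpos]
    positivity
  · exact (axisContribution_of_end (by omega) (by omega)).ge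

/-- The right-hand side interpolates linearly in `deg a` between the bound for interior positions
(`deg a = 2`) and the value at the ends (`deg a = 1`), so that it sums over the axes to an
expression in `deg v` alone. -/
lemma axisContribution_le (hn : 4 ≤ n) (hD : 1 ≤ D) (a : Fin n) :
    axisContribution n D a ≤
      (deg (pathGraph n) a - 1) / (2 * D - 1) + (deg (pathGraph n) a - 2) / (2 * D + 1) := by
  rw [deg_pathGraph (by omega)]
  split_ifs with ha
  · have := (axisContribution_of_interior hn hD ha.1 ha.2).2
    norm_num at this ⊢
    exact this
  · rw [axisContribution_of_end (by omega) (by omega)]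
    apply le_of_eq
    push_cast
    ring

end AxisContribution

section Lattice

variable {m n : ℕ}

lemma lattice_adj_iff {v w : Fin m → Fin n} :
    (lattice m n).Adj v w ↔ ∃ i, (pathGraph n).Adj (v i) (w i) ∧ ∀ j, j ≠ i → v j = w j := by
  simp only [pathGraph_adj]
  rfl

lemma sum_nbrs_lattice {M : Type*} [AddCommMonoid M] (v : Fin m → Fin n)
    (g : (Fin m → Fin n) → M) :
    ∑ u ∈ nbrs (lattice m n) v, g u =
      ∑ i, ∑ x ∈ nbrs (pathGraph n) (v i), g (Function.update v i x) := by
  rw [sum_sigma']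
  symm
  refine sum_bij (fun p _ => Function.update v p.1 p.2) ?_ ?_ ?_ fun _ _ => rfl
  · rintro ⟨i, x⟩ hx
    rw [mem_sigma, mem_nbrs] at hx
    rw [mem_nbrs, lattice_adj_iff]
    exact ⟨i, by simpa using hx.2, fun j hj => (Function.update_of_ne hj x v).symm⟩
  · rintro ⟨i, x⟩ hx ⟨j, y⟩ - h
    rw [mem_sigma, mem_nbrs] at hx
    obtain rfl : i = j := by
      by_contra hij
      have := congrFun h i
      rw [Function.update_self, Function.update_of_ne hij] at this
      exact hx.2.ne this.symm
    simpa using congrFun h i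
  · intro u hu
    rw [mem_nbrs, lattice_adj_iff] at hu
    obtain ⟨i, hi, hj⟩ := hu
    exact ⟨⟨i, u i⟩, mem_sigma.2 ⟨mem_univ i, mem_nbrs.2 hi⟩,
      Function.update_eq_iff.2 ⟨rfl, fun j hji => hj j hji⟩⟩

lemma deg_lattice (v : Fin m → Fin n) :
    deg (lattice m n) v = ∑ i, deg (pathGraph n) (v i) := by
  simp only [deg_eq_card_nbrs, card_eq_sum_ones, sum_nbrs_lattice v]

lemma deg_lattice_update (v : Fin m → Fin n) (i : Fin m) (x : Fin n) :
    deg (lattice m n) (Function.update v i x) + deg (pathGraph n) (v i) =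
      deg (lattice m n) v + deg (pathGraph n) x := by
  rw [deg_lattice, deg_lattice]
  simp_rw [Function.apply_update (fun _ => deg (pathGraph n))]
  rw [sum_update_of_mem (mem_univ i), ← add_sum_erase univ _ (mem_univ i),
    sdiff_singleton_eq_erase]
  ring

lemma lev_lattice (v : Fin m → Fin n) :
    lev (lattice m n) v =
      1 / deg (lattice m n) v * ∑ i, axisContribution n (deg (lattice m n) v) (v i) := by
  rw [lev, sum_nbrs_lattice]
  congr 1
  refine sum_congr rfl fun i _ => sum_congr rfl fun x _ => ?_
  have hdeg : (deg (lattice m n) (Function.update v i x) : ℚ) =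
      deg (lattice m n) v - deg (pathGraph n) (v i) + deg (pathGraph n) x := by
    have := congrArg (Nat.cast : ℕ → ℚ) (deg_lattice_update v i x)
    push_cast at this
    linarith
  rw [hdeg]
  congr 1 <;> ring

lemma le_deg_lattice (hn : 2 ≤ n) (v : Fin m → Fin n) : m ≤ deg (lattice m n) v := by
  rw [deg_lattice]
  simpa using card_nsmul_le_sum univ (fun i => deg (pathGraph n) (v i)) 1 fun i _ => by
    rw [deg_pathGraph hn]; split_ifs <;> norm_num

lemma deg_lattice_le (hn : 2 ≤ n) (v : Fin m → Fin n) : deg (lattice m n) v ≤ 2 * m := by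
  rw [deg_lattice]
  simpa [mul_comm] using
    sum_le_card_nsmul univ (fun i => deg (pathGraph n) (v i)) 2 fun i _ => by
      rw [deg_pathGraph hn]; split_ifs <;> norm_num

lemma neg_le_lev_lattice (hn : 4 ≤ n) (hm : 1 ≤ m) (v : Fin m → Fin n) :
    -(1 / (2 * (m : ℚ) + 1)) ≤ lev (lattice m n) v := by
  have hmD : (m : ℚ) ≤ deg (lattice m n) v := by exact_mod_cast le_deg_lattice (by omega) v
  set D : ℚ := (deg (lattice m n) v : ℚ)
  have hm : (1 : ℚ) ≤ m := by exact_mod_cast hm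
  have hD : 0 < D := by linarith
  have hsum : -(m / (2 * D + 1)) ≤ ∑ i, axisContribution n D (v i) := by
    calc -(m / (2 * D + 1)) = ∑ _i : Fin m, -(1 / (2 * D + 1)) := by simp; ring
      _ ≤ _ := sum_le_sum fun i _ => neg_le_axisContribution hn (by linarith) (v i)
  calc -(1 / (2 * (m : ℚ) + 1)) ≤ 1 / D * -(m / (2 * D + 1)) := by
        rw [mul_neg, neg_le_neg_iff, one_div_mul_eq_div, div_div,
          div_le_div_iff₀ (by positivity) (by linarith)]
        nlinarith
    _ ≤ 1 / D * ∑ i, axisContribution n D (v i) := by gcongr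
    _ = lev (lattice m n) v := (lev_lattice v).symm

lemma lev_lattice_le (hn : 4 ≤ n) (hm : 1 ≤ m) (v : Fin m → Fin n) :
    lev (lattice m n) v ≤ 1 / (8 * (m : ℚ) - 2) := by
  have hmD : (m : ℚ) ≤ deg (lattice m n) v := by exact_mod_cast le_deg_lattice (by omega) v
  have hDm : (deg (lattice m n) v : ℚ) ≤ 2 * m := by exact_mod_cast deg_lattice_le (by omega) v
  set D : ℚ := (deg (lattice m n) v : ℚ) with hD_def
  have hm : (1 : ℚ) ≤ m := by exact_mod_cast hm
  have hD : 0 < D := by linarith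
  have hsum : ∑ i, axisContribution n D (v i) ≤
      (D - m) / (2 * D - 1) + (D - 2 * m) / (2 * D + 1) :=
    calc ∑ i, axisContribution n D (v i)
        ≤ ∑ i, ((deg (pathGraph n) (v i) - 1) / (2 * D - 1) +
            (deg (pathGraph n) (v i) - 2) / (2 * D + 1)) :=
          sum_le_sum fun i _ => axisContribution_le hn (by linarith) (v i)
      _ = (D - m) / (2 * D - 1) + (D - 2 * m) / (2 * D + 1) := by
          simp only [sum_add_distrib, ← sum_div, sum_sub_distrib, hD_def, deg_lattice]
          simp only [sum_const, card_univ, Fintype.card_fin, nsmul_eq_mul, Nat.cast_sum]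
          ring
  -- cleared of denominators, the claim is `(2m - D) * -(4D² + (8 - 24m)D + 4m - 1) ≥ 0`
  have hq : 4 * D ^ 2 + (8 - 24 * m) * D + 4 * m - 1 ≤ 0 := by nlinarith
  calc lev (lattice m n) v = 1 / D * ∑ i, axisContribution n D (v i) := lev_lattice v
    _ ≤ 1 / D * ((D - m) / (2 * D - 1) + (D - 2 * m) / (2 * D + 1)) := by gcongr
    _ ≤ 1 / (8 * (m : ℚ) - 2) := by
        rw [div_add_div _ _ (by linarith) (by linarith), one_div_mul_eq_div, div_div,
          div_le_div_iff₀ (mul_pos (mul_pos (by linarith) (by linarith)) hD) (by linarith)]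
        nlinarith [mul_nonneg (sub_nonneg.2 hDm) (neg_nonneg.2 hq)]

lemma abs_lev_lattice_lt (hn : 4 ≤ n) (hm : 1 ≤ m) (v : Fin m → Fin n) :
    |lev (lattice m n) v| < 1 / m := by
  have hm' : (1 : ℚ) ≤ m := by exact_mod_cast hm
  have lower : 1 / (2 * (m : ℚ) + 1) < 1 / m :=
    one_div_lt_one_div_of_lt (by positivity) (by linarith)
  have upper : 1 / (8 * (m : ℚ) - 2) < 1 / m :=
    one_div_lt_one_div_of_lt (by positivity) (by linarith)
  rw [abs_lt]
  constructor <;> linarith [neg_le_lev_lattice hn hm v, lev_lattice_le hn hm v]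

end Lattice

theorem lattice_leverage_bounds_and_convergence (n : ℕ) (hn : 5 ≤ n) :
    (∀ m : ℕ, 1 ≤ m → ∀ v : Fin m → Fin n,
        -(1 / (2 * (m : ℚ) + 1)) ≤ lev (lattice m n) v ∧
          lev (lattice m n) v ≤ 1 / (8 * (m : ℚ) - 2)) ∧
      (∀ ε : ℚ, 0 < ε → ∃ M : ℕ, ∀ m : ℕ, M ≤ m →
        ∀ v : Fin m → Fin n, |lev (lattice m n) v| < ε) := by
  have hn : 4 ≤ n := by omega
  refine ⟨fun m hm v => ⟨neg_le_lev_lattice hn hm v, lev_lattice_le hn hm v⟩, fun ε hε => ?_⟩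
  obtain ⟨N, hN⟩ := exists_nat_one_div_lt hε
  refine ⟨N + 1, fun m hm v => ?_⟩
  calc |lev (lattice m n) v| < 1 / m := abs_lev_lattice_lt hn (by omega) v
    _ ≤ 1 / ((N : ℚ) + 1) := by gcongr; exact_mod_cast hm
    _ < ε := hN
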